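/- For every n ≥ 20 there exists a triangle-free simple graph G on n vertices with d_2(G) = 4 and e(G) = ⌊(n−4)²/4⌋ + 16. -/

import Mathlib

/-!
Take the blow-up of the 5-cycle whose classes have sizes `4, ⌊n/2⌋ - 6, ⌈n/2⌉ - 6, 4, 4` in
cyclic order. It maps homomorphically onto `C₅`, so it is triangle-free. Deleting a class of
size 4 leaves a blow-up of a path, which is bipartite; deleting at most 3 vertices leaves a
vertex in every class, hence a copy of `C₅`, so `d₂ = 4`. The number of edges is
`∑ cᵢ cᵢ₊₁ = (⌊n/2⌋ - 2)(⌈n/2⌉ - 2) + 16 = ⌊(n - 4)²/4⌋ + 16`.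
-/

/-- `d2 G` is the minimum number of vertices whose deletion makes `G` bipartite. -/
noncomputable def d2 {V : Type*} [Fintype V] (G : SimpleGraph V) : ℕ :=
  sInf {k : ℕ | ∃ T : Set V, T.ncard = k ∧ (G.induce Tᶜ).Colorable 2}

open Finset SimpleGraph

namespace SimpleGraph

variable {V W : Type*}

theorem CliqueFree.of_hom {H : SimpleGraph V} {G : SimpleGraph W} {n : ℕ} (f : H →g G)
    (h : G.CliqueFree n) : H.CliqueFree n := by
  rw [cliqueFree_iff] at h ⊢
  exact ⟨fun c => h.false ((f.comp c.toHom).toCopy (Hom.injective_of_top_hom _))⟩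

theorem Colorable.induce_comap_preimage {G : SimpleGraph W} {S : Set W} {k : ℕ} (f : V → W)
    (h : (G.induce S).Colorable k) : ((G.comap f).induce (f ⁻¹' S)).Colorable k :=
  h.of_hom ⟨fun v => ⟨f v, v.2⟩, id⟩

theorem Colorable.of_induce_comap {G : SimpleGraph W} {f : V → W} {S : Set V} {k : ℕ}
    (hS : ∀ w, ∃ v ∈ S, f v = w) (h : ((G.comap f).induce S).Colorable k) : G.Colorable k := by
  choose s hsS hfs using hS
  exact h.of_hom ⟨fun w => ⟨s w, hsS w⟩, fun {a b} hab => by simpa [hfs] using hab⟩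

theorem not_colorable_two_cycleGraph_of_odd {m : ℕ} (hm : 2 ≤ m) (hodd : Odd m) :
    ¬(cycleGraph m).Colorable 2 := fun h => by
  have := h.chromaticNumber_le
  rw [chromaticNumber_cycleGraph_of_odd m hm hodd] at this
  exact absurd this (by decide)

theorem cycleGraph_five_cliqueFree_three : (cycleGraph 5).CliqueFree 3 := by
  rintro s ⟨hs, hcard⟩
  obtain ⟨a, b, c, hab, hac, hbc, rfl⟩ := card_eq_three.mp hcard
  have no_triangle : ∀ a b c : Fin 5, (cycleGraph 5).Adj a b → (cycleGraph 5).Adj a c →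
      ¬(cycleGraph 5).Adj b c := by decide
  exact no_triangle a b c (hs (by simp) (by simp) hab) (hs (by simp) (by simp) hac)
    (hs (by simp) (by simp) hbc)

theorem colorable_two_induce_cycleGraph_five_compl_zero :
    ((cycleGraph 5).induce {0}ᶜ).Colorable 2 :=
  ⟨Coloring.mk (fun v => if v.1.val % 2 = 0 then 0 else 1) (by decide)⟩

theorem le_ncard_of_colorable_induce_compl_comap_cycleGraph [Fintype V] {m k : ℕ}
    (hm : 2 ≤ m) (hodd : Odd m) {f : V → Fin m} (hf : ∀ i, k ≤ #{v | f v = i}) {T : Set V}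
    (hT : (((cycleGraph m).comap f).induce Tᶜ).Colorable 2) : k ≤ T.ncard := by
  by_contra! hlt
  refine not_colorable_two_cycleGraph_of_odd hm hodd (hT.of_induce_comap fun i => ?_)
  have hcard : T.ncard < ({v | f v = i} : Set V).ncard := by
    rw [Set.ncard_eq_toFinset_card' {v | f v = i}, Set.toFinset_ofPred]
    exact hlt.trans_le (hf i)
  obtain ⟨v, hv, hvT⟩ := Set.exists_mem_notMem_of_ncard_lt_ncard hcard T.toFinite
  exact ⟨v, hvT, hv⟩

theorem d2_eq_of_colorable_of_forall_le [Fintype V] {G : SimpleGraph V} {k : ℕ} {T : Set V}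
    (hT : T.ncard = k) (hcol : (G.induce Tᶜ).Colorable 2)
    (hmin : ∀ T : Set V, (G.induce Tᶜ).Colorable 2 → k ≤ T.ncard) : d2 G = k :=
  IsLeast.csInf_eq ⟨⟨T, hT, hcol⟩, by rintro _ ⟨T', rfl, hT'⟩; exact hmin T' hT'⟩

theorem degree_comap [Fintype V] [Fintype W] [DecidableEq W] (G : SimpleGraph W)
    [DecidableRel G.Adj] (f : V → W) (v : V) :
    (G.comap f).degree v = ∑ w ∈ G.neighborFinset (f v), #{u | f u = w} := by
  rw [← card_neighborFinset_eq_degree,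
    card_eq_sum_card_fiberwise (t := G.neighborFinset (f v)) fun u hu => by simpa using hu]
  refine sum_congr rfl fun w hw => congrArg card ?_
  ext u
  simp only [mem_filter, mem_neighborFinset, comap_adj, mem_univ, true_and,
    and_iff_right_iff_imp]
  rintro rfl
  simpa using hw

theorem two_mul_card_edgeFinset_comap [Fintype V] [Fintype W] [DecidableEq V] [DecidableEq W]
    (G : SimpleGraph W) [DecidableRel G.Adj] (f : V → W) :
    2 * #(G.comap f).edgeFinset =
      ∑ w, ∑ w' ∈ G.neighborFinset w, #{v | f v = w} * #{v | f v = w'} := by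
  rw [← sum_degrees_eq_twice_card_edges, ← sum_fiberwise univ f]
  refine sum_congr rfl fun w _ => ?_
  rw [← mul_sum, ← smul_eq_mul, ← sum_const]
  exact sum_congr rfl fun v hv => by rw [degree_comap, (mem_filter.mp hv).2]

theorem sum_neighborFinset_cycleGraph (m : ℕ) (c : Fin (m + 3) → ℕ) :
    ∑ w, ∑ w' ∈ (cycleGraph (m + 3)).neighborFinset w, c w * c w' =
      2 * ∑ w, c w * c (w + 1) := by
  have hne : ∀ w : Fin (m + 3), w - 1 ≠ w + 1 := by
    intro w h
    have h2 : (2 : Fin (m + 3)) = 0 := by grind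
    simp [Fin.ext_iff, Nat.mod_eq_of_lt (show 2 < m + 3 by omega)] at h2
  simp only [cycleGraph_neighborFinset, sum_pair (hne _), sum_add_distrib, two_mul]
  congr 1
  exact Fintype.sum_equiv (Equiv.subRight 1) _ _ fun w => by simp [mul_comm]

theorem card_edgeFinset_comap_cycleGraph [Fintype V] [DecidableEq V] (m : ℕ)
    (f : V → Fin (m + 3)) :
    #((cycleGraph (m + 3)).comap f).edgeFinset = ∑ i, #{v | f v = i} * #{v | f v = i + 1} := by
  have := two_mul_card_edgeFinset_comap (cycleGraph (m + 3)) f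
  rw [sum_neighborFinset_cycleGraph] at this
  omega

end SimpleGraph

theorem Fin.card_filter_val_mem_Ico {n a b : ℕ} (hb : b ≤ n) :
    #{v : Fin n | a ≤ v.val ∧ v.val < b} = b - a := by
  rw [← Nat.card_Ico, ← card_map Fin.valEmbedding]
  congr 1
  ext m
  simp only [mem_map, mem_filter, mem_univ, true_and, Fin.valEmbedding_apply, mem_Ico]
  exact ⟨fun ⟨v, hv, hvm⟩ => hvm ▸ hv, fun h => ⟨⟨m, by omega⟩, h, rfl⟩⟩

theorem Nat.div_two_mul_sub_div_two (m : ℕ) : m / 2 * (m - m / 2) = m ^ 2 / 4 := by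
  obtain ⟨k, rfl | rfl⟩ := Nat.even_or_odd' m
  · rw [show 2 * k / 2 = k by omega, show 2 * k - k = k by omega]
    symm; apply Nat.div_eq_of_eq_mul_left (by norm_num); ring
  · rw [show (2 * k + 1) / 2 = k by omega, show 2 * k + 1 - k = k + 1 by omega]
    symm; apply Nat.div_eq_of_lt_le <;> ring_nf <;> omega

def c5Label (n : ℕ) (v : Fin n) : Fin 5 :=
  if v.val < 4 then 0 else if v.val < n / 2 - 2 then 1 else if v.val < n - 8 then 2
  else if v.val < n - 4 then 3 else 4

theorem card_c5Label_fiber {n : ℕ} (hn : 20 ≤ n) (i : Fin 5) :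
    #{v | c5Label n v = i} = ![4, n / 2 - 6, n - n / 2 - 6, 4, 4] i := by
  let lo := ![0, 4, n / 2 - 2, n - 8, n - 4]
  let hi := ![4, n / 2 - 2, n - 8, n - 4, n]
  have hfiber : ∀ v : Fin n, c5Label n v = i ↔ lo i ≤ v.val ∧ v.val < hi i := by
    intro v
    fin_cases i <;> simp [lo, hi, c5Label] <;> split_ifs <;> simp <;> omega
  simp_rw [hfiber]
  rw [Fin.card_filter_val_mem_Ico (by fin_cases i <;> simp [hi] <;> omega)]
  fin_cases i <;> simp [lo, hi] <;> omega

theorem card_edgeFinset_comap_c5Label {n : ℕ} (hn : 20 ≤ n) :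
    #((cycleGraph 5).comap (c5Label n)).edgeFinset = (n - 4) ^ 2 / 4 + 16 := by
  rw [card_edgeFinset_comap_cycleGraph 2, Fin.sum_univ_five]
  simp only [Fin.isValue, Fin.reduceAdd, card_c5Label_fiber hn, Matrix.cons_val]
  have hfloor : (n - 4) / 2 = n / 2 - 6 + 4 := by omega
  have hceil : n - 4 - (n - 4) / 2 = n - n / 2 - 6 + 4 := by omega
  rw [← Nat.div_two_mul_sub_div_two, hceil, hfloor]
  ring

theorem stmt_4 (n : ℕ) (hn : 20 ≤ n) :
    ∃ G : SimpleGraph (Fin n), G.CliqueFree 3 ∧ d2 G = 4 ∧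
      G.edgeSet.ncard = (n - 4) ^ 2 / 4 + 16 := by
  have hfiber := card_c5Label_fiber hn
  have hclass_ge : ∀ i, 4 ≤ #{v | c5Label n v = i} := by
    intro i
    fin_cases i <;> simp [hfiber] <;> omega
  have hclass_zero : ({v | c5Label n v = 0} : Set (Fin n)).ncard = 4 := by
    rw [Set.ncard_eq_toFinset_card', Set.toFinset_ofPred, hfiber 0]
    rfl
  refine ⟨(cycleGraph 5).comap (c5Label n),
    cycleGraph_five_cliqueFree_three.of_hom ⟨c5Label n, id⟩,
    d2_eq_of_colorable_of_forall_le hclass_zero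
      (colorable_two_induce_cycleGraph_five_compl_zero.induce_comap_preimage _)
      fun T hT => le_ncard_of_colorable_induce_compl_comap_cycleGraph (by norm_num)
        (by decide) hclass_ge hT, ?_⟩
  rw [← coe_edgeFinset, Set.ncard_coe_finset, card_edgeFinset_comap_c5Label hn]
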